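/- arXiv:2410.05640 — 3 statements merged into one kernel-verified Lean document; each statement's English description precedes it below -/
import Mathlib

section
/- Generalized pressure distribution principle: Let Z ⊆ X be a Borel set. Suppose there exist ε > 0, s ≥ 0, a sequence of Borel probability measures μ_k on X, a constant K > 0 and an integer N such that limsup_{k→∞} μ_k(B_n(x,ε)) ≤ K·exp(−ns + Σ_{i=0}^{n−1} φ(T^i x)) for every Bowen ball B_n(x,ε) with B_n(x,ε) ∩ Z ≠ ∅ and n ≥ N. If some weak* limit measure ν of the sequence (μ_k) satisfies ν(Z) > 0, then P(Z, φ, ε) ≥ s. -/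
open Filter Set Metric Topology MeasureTheory
open scoped ENNReal NNReal

noncomputable section

/-- Birkhoff sum `S_n φ(x)`. -/
def birkhoff {X : Type*} (T : X → X) (φ : X → ℝ) (n : ℕ) (x : X) : ℝ :=
  ∑ i ∈ Finset.range n, φ (T^[i] x)

/-- Bowen ball `B_n(x, ε)`. -/
def bowenBall {X : Type*} [PseudoMetricSpace X] (T : X → X) (n : ℕ) (x : X) (ε : ℝ) : Set X :=
  {y | ∀ i < n, dist (T^[i] x) (T^[i] y) < ε}

/-- The quantity `M(Z, t, φ, n, ε)` of Pesin–Pitskel: infimum over countable covers of `Z`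
by Bowen balls `B_m(x,ε)` with `m ≥ n` of `Σ exp(-t m + sup_{B_m(x,ε)} S_m φ)`. -/
def ppM {X : Type*} [PseudoMetricSpace X] (T : X → X) (φ : X → ℝ) (Z : Set X)
    (t : ℝ) (n : ℕ) (ε : ℝ) : ℝ≥0∞ :=
  ⨅ (c : ℕ → ℕ × X) (_ : ∀ i, n ≤ (c i).1)
    (_ : Z ⊆ ⋃ i, bowenBall T (c i).1 (c i).2 ε),
    ∑' i, ENNReal.ofReal (Real.exp (-t * (c i).1 +
      sSup ((birkhoff T φ (c i).1) '' bowenBall T (c i).1 (c i).2 ε)))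

/-- `M(Z,t,φ,ε) = lim_{n→∞} M(Z,t,φ,n,ε)` (a monotone limit, hence a supremum). -/
def ppMlim {X : Type*} [PseudoMetricSpace X] (T : X → X) (φ : X → ℝ) (Z : Set X)
    (t : ℝ) (ε : ℝ) : ℝ≥0∞ :=
  ⨆ n : ℕ, ppM T φ Z t n ε

/-- Pesin–Pitskel pressure at scale `ε`: `P(Z,φ,ε) = inf {t : M(Z,t,φ,ε) = 0}`. -/
def ppPressureAt {X : Type*} [PseudoMetricSpace X] (T : X → X) (φ : X → ℝ) (Z : Set X)
    (ε : ℝ) : ℝ :=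
  sInf {t : ℝ | ppMlim T φ Z t ε = 0}

/-- Pesin–Pitskel topological pressure `P(Z,φ) = lim_{ε→0} P(Z,φ,ε)`. -/
def ppPressure {X : Type*} [PseudoMetricSpace X] (T : X → X) (φ : X → ℝ) (Z : Set X) : ℝ :=
  limsup (fun ε => ppPressureAt T φ Z ε) (𝓝[>] (0 : ℝ))

/-- `E` is an `(n,ε)`-separated set for `T`. -/
def IsSep {X : Type*} [PseudoMetricSpace X] (T : X → X) (n : ℕ) (ε : ℝ) (E : Set X) : Prop :=
  ∀ x ∈ E, ∀ y ∈ E, x ≠ y → ∃ i < n, ε < dist (T^[i] x) (T^[i] y)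

/-- `P(φ, n, ε)`: supremum of `Σ_{x∈E} e^{S_n φ(x)}` over `(n,ε)`-separated sets `E`. -/
def sepSum {X : Type*} [PseudoMetricSpace X] (T : X → X) (φ : X → ℝ) (n : ℕ) (ε : ℝ) : ℝ :=
  sSup {r : ℝ | ∃ E : Finset X, IsSep T n ε ↑E ∧ r = ∑ x ∈ E, Real.exp (birkhoff T φ n x)}

/-- Classical topological pressure via separated sets. -/
def Ptop {X : Type*} [PseudoMetricSpace X] (T : X → X) (φ : X → ℝ) : ℝ :=
  limsup (fun ε => limsup (fun n : ℕ => Real.log (sepSum T φ n ε) / n) atTop) (𝓝[>] (0 : ℝ))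

/-- The specification property. -/
def Specification {X : Type*} [PseudoMetricSpace X] (T : X → X) : Prop :=
  ∀ ε : ℝ, 0 < ε → ∃ m : ℕ, ∀ (k : ℕ) (a b : Fin k → ℕ) (xs : Fin k → X),
    (∀ j, a j ≤ b j) →
    (∀ (j : ℕ) (h : j + 1 < k), b ⟨j, Nat.lt_of_succ_lt h⟩ + m ≤ a ⟨j + 1, h⟩) →
    ∃ x : X, ∀ j : Fin k, ∀ p ≤ b j - a j, dist (T^[p + a j] x) (T^[p] (xs j)) < ε

/-- The non-dense orbit set `E(z₀)`. -/
def Eset {X : Type*} [TopologicalSpace X] (T : X → X) (z₀ : X) : Set X :=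
  {x | z₀ ∉ closure (Set.range fun n : ℕ => T^[n] x)}

end

/-!
If `t < s`, the hypothesis and the portmanteau theorem bound `ν(B_n(x,ε))` by
`K exp(-t n + sup_{B_n(x,ε)} S_n φ)` for every Bowen ball meeting `Z` with `n ≥ N`. Summing over
any cover admissible for `M(Z,t,φ,N,ε)` gives `ν(Z) ≤ K M(Z,t,φ,N,ε)`, hence `M(Z,t,φ,ε) > 0`.
So `s` is a lower bound of `{t | M(Z,t,φ,ε) = 0}`. That set is nonempty, which matters because
`sInf ∅ = 0`: a compact space is covered by `A ^ m`
Bowen balls of length `m`, so `M(Z,t,φ,ε) = 0` as soon as `e^{sup φ - t} A < 1`.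
-/

section

variable {X : Type*} {T : X → X} {φ : X → ℝ} {Z : Set X} {ε t M : ℝ}

lemma birkhoff_le_mul (hφM : ∀ y, φ y ≤ M) (n : ℕ) (y : X) : birkhoff T φ n y ≤ n * M := by
  simpa [birkhoff] using Finset.sum_le_sum fun i (_ : i ∈ Finset.range n) => hφM (T^[i] y)

lemma bddAbove_birkhoff_image (hφM : ∀ y, φ y ≤ M) (n : ℕ) (S : Set X) :
    BddAbove (birkhoff T φ n '' S) :=
  ⟨n * M, forall_mem_image.2 fun y _ => birkhoff_le_mul hφM n y⟩

variable [PseudoMetricSpace X]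

noncomputable def bowenWeight (T : X → X) (φ : X → ℝ) (t : ℝ) (n : ℕ) (x : X) (ε : ℝ) : ℝ≥0∞ :=
  ENNReal.ofReal (Real.exp (-t * n + sSup (birkhoff T φ n '' bowenBall T n x ε)))

lemma mem_bowenBall_self (T : X → X) (n : ℕ) (x : X) (hε : 0 < ε) : x ∈ bowenBall T n x ε :=
  fun i _ => by simpa using hε

lemma isOpen_bowenBall (hT : Continuous T) (n : ℕ) (x : X) (ε : ℝ) :
    IsOpen (bowenBall T n x ε) := by
  have : bowenBall T n x ε = ⋂ i ∈ {i | i < n}, {y | dist (T^[i] x) (T^[i] y) < ε} := by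
    ext y
    simp [bowenBall]
  rw [this]
  exact (Set.finite_lt_nat n).isOpen_biInter fun i _ =>
    isOpen_lt (continuous_const.dist (hT.iterate i)) continuous_const

lemma bowenWeight_le_pow (hφM : ∀ y, φ y ≤ M) (hε : 0 < ε) (n : ℕ) (x : X) :
    bowenWeight T φ t n x ε ≤ ENNReal.ofReal (Real.exp (M - t)) ^ n := by
  have hsup : sSup (birkhoff T φ n '' bowenBall T n x ε) ≤ n * M :=
    csSup_le ((nonempty_of_mem (mem_bowenBall_self T n x hε)).image _)
      (forall_mem_image.2 fun y _ => birkhoff_le_mul hφM n y)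
  rw [bowenWeight, ← ENNReal.ofReal_pow (Real.exp_pos _).le, ← Real.exp_nat_mul]
  gcongr
  linarith

lemma ofReal_exp_birkhoff_le_bowenWeight (hφM : ∀ y, φ y ≤ M) (hε : 0 < ε) {s : ℝ} (hts : t ≤ s)
    (n : ℕ) (x : X) :
    ENNReal.ofReal (Real.exp (-n * s + birkhoff T φ n x)) ≤ bowenWeight T φ t n x ε := by
  have hcenter : birkhoff T φ n x ≤ sSup (birkhoff T φ n '' bowenBall T n x ε) :=
    le_csSup (bddAbove_birkhoff_image hφM n _) (mem_image_of_mem _ (mem_bowenBall_self T n x hε))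
  have hts' : (n : ℝ) * t ≤ n * s := mul_le_mul_of_nonneg_left hts n.cast_nonneg
  exact ENNReal.ofReal_le_ofReal (Real.exp_le_exp.2 (by linarith))

lemma exists_bowenBall_cover_card_le_pow [CompactSpace X] [Nonempty X] (T : X → X) (hε : 0 < ε) :
    ∃ A : ℕ, ∀ m, ∃ E : Finset X, E.card ≤ A ^ m ∧ ∀ y, ∃ x ∈ E, y ∈ bowenBall T m x ε := by
  classical
  obtain ⟨F, hF⟩ := isCompact_univ.elim_finite_subcover (fun x : X => ball x (ε / 2))
    (fun _ => isOpen_ball) (fun y _ => mem_iUnion.2 ⟨y, mem_ball_self (half_pos hε)⟩)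
  have hnet : ∀ y : X, ∃ f ∈ F, dist y f < ε / 2 := fun y => by simpa using hF (mem_univ y)
  choose near hnearF hnear using hnet
  refine ⟨F.card, fun m => ?_⟩
  -- points with the same itinerary through the `ε/2`-net lie in a common Bowen ball
  let code : X → Fin m → X := fun y i => near (T^[i] y)
  refine ⟨(Fintype.piFinset fun _ => F).image (Function.invFun code), ?_, fun y =>
    ⟨Function.invFun code (code y), Finset.mem_image_of_mem _
      (Fintype.mem_piFinset.2 fun i => hnearF (T^[i] y)), fun i hi => ?_⟩⟩
  · exact Finset.card_image_le.trans (Fintype.card_piFinset_const F m).le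
  · set x := Function.invFun code (code y)
    have hsame : near (T^[i] x) = near (T^[i] y) :=
      congrFun (Function.invFun_eq (f := code) ⟨y, rfl⟩) ⟨i, hi⟩
    calc dist (T^[i] x) (T^[i] y)
        ≤ dist (T^[i] x) (near (T^[i] y)) + dist (near (T^[i] y)) (T^[i] y) := dist_triangle _ _ _
      _ < ε / 2 + ε / 2 := add_lt_add (hsame ▸ hnear _) (dist_comm (T^[i] y) _ ▸ hnear _)
      _ = ε := add_halves ε

lemma ppM_le_tsum_bowenWeight (c : ℕ → ℕ × X) {n : ℕ} (hc : ∀ i, n ≤ (c i).1)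
    (hZ : Z ⊆ ⋃ i, bowenBall T (c i).1 (c i).2 ε) :
    ppM T φ Z t n ε ≤ ∑' i, bowenWeight T φ t (c i).1 (c i).2 ε :=
  iInf_le_of_le c (iInf_le_of_le hc (iInf_le _ hZ))

lemma ppM_le_of_finset_cover (hφM : ∀ y, φ y ≤ M) (hε : 0 < ε) {n m : ℕ} (hnm : n ≤ m)
    {E : Finset X} (x₀ : X) (hE : ∀ z ∈ Z, ∃ x ∈ E, z ∈ bowenBall T m x ε) :
    ppM T φ Z t n ε ≤ ENNReal.ofReal (Real.exp (M - t)) ^ m *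
      (E.card + (1 - ENNReal.ofReal (Real.exp (M - t)))⁻¹) := by
  set q := ENNReal.ofReal (Real.exp (M - t))
  set l := E.toList
  -- the balls past the end of `l` are padding, long enough for their weights to be summable
  let c : ℕ → ℕ × X := fun i => (m + (i - l.length), l.getD i x₀)
  have hcover : Z ⊆ ⋃ i, bowenBall T (c i).1 (c i).2 ε := by
    intro z hz
    obtain ⟨x, hxE, hzx⟩ := hE z hz
    obtain ⟨i, hi, rfl⟩ := List.mem_iff_getElem.1 (Finset.mem_toList.2 hxE)
    refine mem_iUnion.2 ⟨i, ?_⟩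
    show z ∈ bowenBall T (m + (i - l.length)) (l.getD i x₀) ε
    rwa [Nat.sub_eq_zero_of_le hi.le, Nat.add_zero, List.getD_eq_getElem _ _ hi]
  calc ppM T φ Z t n ε ≤ ∑' i, bowenWeight T φ t (c i).1 (c i).2 ε :=
        ppM_le_tsum_bowenWeight c (fun i => hnm.trans (Nat.le_add_right _ _)) hcover
    _ ≤ ∑' i, q ^ m * q ^ (i - l.length) :=
        ENNReal.tsum_le_tsum fun i => (bowenWeight_le_pow hφM hε _ _).trans_eq (pow_add _ _ _)
    _ = q ^ m * (E.card + (1 - q)⁻¹) := by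
      have hfin : ∑ i ∈ Finset.range l.length, q ^ (i - l.length) = E.card := by
        rw [Finset.sum_congr rfl fun i hi =>
          by rw [Nat.sub_eq_zero_of_le (Finset.mem_range.1 hi).le, pow_zero]]
        simp [l]
      rw [ENNReal.tsum_mul_left, ← Summable.sum_add_tsum_nat_add' (k := l.length) ENNReal.summable,
        hfin]
      simp [ENNReal.tsum_geometric]

lemma ppMlim_eq_zero_of_exp_mul_lt_one [Nonempty X] (hφM : ∀ y, φ y ≤ M) (hε : 0 < ε) {A : ℕ}
    (hA : 1 ≤ A)
    (hcover : ∀ m, ∃ E : Finset X, E.card ≤ A ^ m ∧ ∀ y, ∃ x ∈ E, y ∈ bowenBall T m x ε)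
    (ht : Real.exp (M - t) * A < 1) : ppMlim T φ Z t ε = 0 := by
  set q := ENNReal.ofReal (Real.exp (M - t))
  have hqA : q * A < 1 := by
    rwa [← ENNReal.ofReal_natCast, ← ENNReal.ofReal_mul (Real.exp_pos _).le, ENNReal.ofReal_lt_one]
  have hq : q < 1 := (le_mul_of_one_le_right' (by exact_mod_cast hA)).trans_lt hqA
  have hlim : Tendsto (fun m : ℕ => q ^ m * (A ^ m + (1 - q)⁻¹)) atTop (𝓝 0) := by
    simp_rw [mul_add, ← mul_pow]
    simpa using (ENNReal.tendsto_pow_atTop_nhds_zero_of_lt_one hqA).add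
      (ENNReal.Tendsto.mul_const (ENNReal.tendsto_pow_atTop_nhds_zero_of_lt_one hq)
        (Or.inr (ENNReal.inv_ne_top.2 (tsub_pos_of_lt hq).ne')))
  refine ENNReal.iSup_eq_zero.2 fun n => le_antisymm
    (ge_of_tendsto hlim (eventually_atTop.2 ⟨n, fun m hnm => ?_⟩)) bot_le
  obtain ⟨E, hEcard, hE⟩ := hcover m
  refine (ppM_le_of_finset_cover hφM hε hnm (Classical.arbitrary X) fun z _ => hE z).trans ?_
  gcongr
  exact_mod_cast hEcard

lemma exists_ppMlim_eq_zero [CompactSpace X] [Nonempty X] (T : X → X) (hφ : Continuous φ)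
    (Z : Set X) (hε : 0 < ε) : ∃ t, ppMlim T φ Z t ε = 0 := by
  obtain ⟨M, hM⟩ := (isCompact_range hφ).bddAbove
  obtain ⟨A, hA⟩ := exists_bowenBall_cover_card_le_pow T hε
  refine ⟨M + Real.log (2 * (A + 1)), ppMlim_eq_zero_of_exp_mul_lt_one (fun y => hM ⟨y, rfl⟩) hε
    (Nat.le_add_left 1 A) (fun m => ?_) ?_⟩
  · obtain ⟨E, hEcard, hE⟩ := hA m
    exact ⟨E, hEcard.trans (Nat.pow_le_pow_left A.le_succ m), hE⟩
  · rw [show M - (M + Real.log (2 * (A + 1))) = -Real.log (2 * (A + 1)) by ring, Real.exp_neg,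
      Real.exp_log (by positivity)]
    push_cast
    field_simp
    norm_num

lemma measure_le_mul_ppM [MeasurableSpace X] {ν : Measure X} {C : ℝ≥0∞} (hC0 : C ≠ 0)
    (hC : C ≠ ∞) {N : ℕ}
    (hball : ∀ x n, N ≤ n → (bowenBall T n x ε ∩ Z).Nonempty →
      ν (bowenBall T n x ε) ≤ C * bowenWeight T φ t n x ε) :
    ν Z ≤ C * ppM T φ Z t N ε := by
  simp only [ppM, ENNReal.mul_iInf_of_ne hC0 hC]
  refine le_iInf fun c => le_iInf fun hc => le_iInf fun hZ => ?_
  calc ν Z ≤ ν (⋃ i, bowenBall T (c i).1 (c i).2 ε ∩ Z) :=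
        measure_mono ((subset_inter hZ subset_rfl).trans (iUnion_inter _ _).subset)
    _ ≤ ∑' i, ν (bowenBall T (c i).1 (c i).2 ε ∩ Z) := measure_iUnion_le _
    _ ≤ ∑' i, C * bowenWeight T φ t (c i).1 (c i).2 ε := ENNReal.tsum_le_tsum fun i =>
        (bowenBall T (c i).1 (c i).2 ε ∩ Z).eq_empty_or_nonempty.elim (fun h => by simp [h])
          fun h => (measure_mono inter_subset_left).trans (hball _ _ (hc i) h)
    _ = C * ∑' i, bowenWeight T φ t (c i).1 (c i).2 ε := ENNReal.tsum_mul_left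

lemma le_ppPressureAt_of_measure_bowenBall_le [CompactSpace X] [MeasurableSpace X]
    (hφ : Continuous φ) (hε : 0 < ε) {ν : Measure X} (hνZ : ν Z ≠ 0) {C : ℝ≥0∞} (hC0 : C ≠ 0)
    (hC : C ≠ ∞) {N : ℕ} {s : ℝ}
    (hball : ∀ x n, N ≤ n → (bowenBall T n x ε ∩ Z).Nonempty →
      ν (bowenBall T n x ε) ≤ C * ENNReal.ofReal (Real.exp (-n * s + birkhoff T φ n x))) :
    s ≤ ppPressureAt T φ Z ε := by
  have : Nonempty X := ⟨(nonempty_of_measure_ne_zero hνZ).some⟩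
  obtain ⟨M, hM⟩ := (isCompact_range hφ).bddAbove
  refine le_csInf (exists_ppMlim_eq_zero T hφ Z hε) fun t (ht : ppMlim T φ Z t ε = 0) =>
    not_lt.1 fun hts => hνZ ?_
  have hN : ppM T φ Z t N ε = 0 :=
    le_antisymm ((le_iSup (fun n => ppM T φ Z t n ε) N).trans ht.le) bot_le
  have hweight : ∀ x n, N ≤ n → (bowenBall T n x ε ∩ Z).Nonempty →
      ν (bowenBall T n x ε) ≤ C * bowenWeight T φ t n x ε := fun x n hn hne =>
    (hball x n hn hne).trans <| by
      gcongr
      exact ofReal_exp_birkhoff_le_bowenWeight (fun y => hM ⟨y, rfl⟩) hε hts.le n x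
  simpa [hN] using measure_le_mul_ppM hC0 hC hweight

end

lemma measure_le_limsup_of_tendsto_integral {X : Type*} [PseudoMetricSpace X]
    [MeasurableSpace X] [OpensMeasurableSpace X] {μ : ℕ → Measure X}
    [∀ k, IsProbabilityMeasure (μ k)] {ν : Measure X} [IsProbabilityMeasure ν] {σ : ℕ → ℕ}
    (hσ : Tendsto σ atTop atTop)
    (hweak : ∀ f : C(X, ℝ), Tendsto (fun k => ∫ x, f x ∂(μ (σ k))) atTop (𝓝 (∫ x, f x ∂ν)))
    {B : Set X} (hB : IsOpen B) :
    ν B ≤ limsup (fun k => μ k B) atTop := by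
  let P : ProbabilityMeasure X := ⟨ν, inferInstance⟩
  let Ps : ℕ → ProbabilityMeasure X := fun k => ⟨μ (σ k), inferInstance⟩
  have hconv : Tendsto Ps atTop (𝓝 P) :=
    ProbabilityMeasure.tendsto_iff_forall_integral_tendsto.2 fun f => hweak f.toContinuousMap
  calc ν B ≤ liminf (fun k => μ (σ k) B) atTop :=
        ProbabilityMeasure.le_liminf_measure_open_of_tendsto hconv hB
    _ ≤ limsup (fun k => μ (σ k) B) atTop := liminf_le_limsup
    _ ≤ limsup (fun k => μ k B) atTop := by
        rw [show (fun k => μ (σ k) B) = (fun k => μ k B) ∘ σ from rfl, limsup_comp]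
        exact limsup_le_limsup_of_le hσ

theorem stmt4_general {X : Type*} [MetricSpace X] [CompactSpace X]
    [MeasurableSpace X] [BorelSpace X]
    (T : X → X) (hT : Continuous T) (φ : X → ℝ) (hφ : Continuous φ)
    (Z : Set X)
    (ε s : ℝ) (hε : 0 < ε)
    (μ : ℕ → Measure X) (hμ : ∀ k, IsProbabilityMeasure (μ k))
    (K : ℝ) (hK : 0 < K) (N : ℕ)
    (hbound : ∀ (x : X) (n : ℕ), N ≤ n → (bowenBall T n x ε ∩ Z).Nonempty →
      Filter.atTop.limsup (fun k => ((μ k) (bowenBall T n x ε)).toReal) ≤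
        K * Real.exp (-(n : ℝ) * s + birkhoff T φ n x))
    (ν : Measure X) (hν : IsProbabilityMeasure ν)
    (σ : ℕ → ℕ) (hσ : StrictMono σ)
    (hweak : ∀ f : C(X, ℝ), Filter.Tendsto (fun k => ∫ x, f x ∂(μ (σ k)))
      Filter.atTop (𝓝 (∫ x, f x ∂ν)))
    (hνZ : 0 < ν Z) :
    s ≤ ppPressureAt T φ Z ε := by
  refine le_ppPressureAt_of_measure_bowenBall_le (N := N) (s := s) hφ hε hνZ.ne'
    (by simpa using hK) ENNReal.ofReal_ne_top fun x n hn hne => ?_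
  calc ν (bowenBall T n x ε) ≤ limsup (fun k => μ k (bowenBall T n x ε)) atTop :=
        measure_le_limsup_of_tendsto_integral hσ.tendsto_atTop hweak
          (isOpen_bowenBall hT n x ε)
    _ = ENNReal.ofReal (limsup (fun k => (μ k (bowenBall T n x ε)).toReal) atTop) :=
        (ENNReal.ofReal_limsup_toReal (C := 1)
          (.of_forall fun k => by simpa using prob_le_one)).symm
    _ ≤ ENNReal.ofReal (K * Real.exp (-n * s + birkhoff T φ n x)) :=
        ENNReal.ofReal_le_ofReal (hbound x n hn hne)
    _ = ENNReal.ofReal K * ENNReal.ofReal (Real.exp (-n * s + birkhoff T φ n x)) :=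
        ENNReal.ofReal_mul hK.le

/-- Generalised pressure distribution principle. -/
theorem stmt4 {X : Type*} [MetricSpace X] [CompactSpace X]
    [MeasurableSpace X] [BorelSpace X]
    (T : X → X) (hT : Continuous T) (φ : X → ℝ) (hφ : Continuous φ)
    (Z : Set X) (hZBorel : MeasurableSet Z)
    (ε s : ℝ) (hε : 0 < ε) (hs : 0 ≤ s)
    (μ : ℕ → Measure X) (hμ : ∀ k, IsProbabilityMeasure (μ k))
    (K : ℝ) (hK : 0 < K) (N : ℕ)
    (hbound : ∀ (x : X) (n : ℕ), N ≤ n → (bowenBall T n x ε ∩ Z).Nonempty →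
      Filter.atTop.limsup (fun k => ((μ k) (bowenBall T n x ε)).toReal) ≤
        K * Real.exp (-(n : ℝ) * s + birkhoff T φ n x))
    (ν : Measure X) (hν : IsProbabilityMeasure ν)
    (σ : ℕ → ℕ) (hσ : StrictMono σ)
    (hweak : ∀ f : C(X, ℝ), Filter.Tendsto (fun k => ∫ x, f x ∂(μ (σ k)))
      Filter.atTop (𝓝 (∫ x, f x ∂ν)))
    (hνZ : 0 < ν Z) :
    s ≤ ppPressureAt T φ Z ε :=
  stmt4_general T hT φ hφ Z ε s hε μ hμ K hK N hbound ν hν σ hσ hweak hνZ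
end

section
/- For a strictly positive continuous function φ on a compact metric space with continuous T, the function s ↦ P_top(−sφ) is strictly decreasing and continuous on ℝ, tends to −∞ as s → ∞ and to +∞ as s → −∞ (when h_top(T) is finite and φ ≥ c > 0); hence Bowen's equation P_top(−sφ) = 0 has a unique solution provided h_top(T) ≥0, and the solution equals sup{h_μ(T)/∫φdμ : μ ∈ M(X,T)} when h_top(T) > 0. -/
open Set Filter Topology MeasureTheory

noncomputable section

/-- The Kolmogorov–Sinai entropy of `μ`: supremum over finite measurable partitions of
the exponential growth rate of the entropy of the refined partitions. -/
def kolSinai {X : Type*} [MeasurableSpace X] (T : X → X) (μ : Measure X) : ℝ :=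
  ⨆ (k : ℕ), ⨆ (P : Fin k → Set X),
    ⨆ (_ : (∀ i, MeasurableSet (P i)) ∧ Pairwise (Function.onFun Disjoint P) ∧
        (⋃ i, P i) = Set.univ),
    Filter.atTop.liminf fun n : ℕ =>
      (∑ f : Fin n → Fin k,
        Real.negMulLog ((μ (⋂ i : Fin n, T^[(i : ℕ)] ⁻¹' P (f i))).toReal)) / n

/-- The classical topological pressure, expressed through the variational principle:
`P_top(ψ) = sup { h_μ(T) + ∫ ψ dμ : μ ∈ M(X,T) }`. -/
def PtopVar {X : Type*} [MeasurableSpace X] (T : X → X) (ψ : X → ℝ) : ℝ :=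
  sSup {r : ℝ | ∃ μ : Measure X, IsProbabilityMeasure μ ∧ MeasurePreserving T μ μ ∧
    r = kolSinai T μ + ∫ x, ψ x ∂μ}

end

/-!
Write `P(s) = P_top(-sφ) = sup_μ (h_μ(T) - s ∫ φ dμ)`, a supremum of affine functions of `s`
whose slopes `-∫ φ dμ` lie in `[-C, -c]`, where `C = max φ`. For `s ≤ t` this gives
`P(t) ≤ P(s) - (t - s) c` and `P(s) ≤ P(t) + (t - s) C`: the first yields strict decrease and
the limits at `±∞`, the two together Lipschitz continuity, hence a unique zero. At
`s₀ = sup_μ h_μ(T) / ∫ φ dμ` every affine piece is `≤ 0`, while for `s < s₀` some piece is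
positive, so `P(s₀) = 0` by continuity.
-/

section AffineSup

variable {ι : Type*} {M : Set ι} {h a : ι → ℝ} {c C : ℝ}

noncomputable def affineSup (M : Set ι) (h a : ι → ℝ) (s : ℝ) : ℝ :=
  sSup ((fun i => h i - s * a i) '' M)

theorem bddAbove_image_sub_mul (hh : BddAbove (h '' M)) (ha : ∀ i ∈ M, a i ∈ Icc c C)
    (s : ℝ) : BddAbove ((fun i => h i - s * a i) '' M) := by
  obtain ⟨H, hH⟩ := hh
  refine ⟨H + max (-(s * c)) (-(s * C)), forall_mem_image.2 fun i hi => ?_⟩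
  have hhi := hH (mem_image_of_mem h hi)
  obtain ⟨hci, hiC⟩ := ha i hi
  rcases le_total 0 s with hs | hs
  · nlinarith [le_max_left (-(s * c)) (-(s * C))]
  · nlinarith [le_max_right (-(s * c)) (-(s * C))]

theorem sub_mul_le_affineSup (hh : BddAbove (h '' M)) (ha : ∀ i ∈ M, a i ∈ Icc c C)
    {i : ι} (hi : i ∈ M) (s : ℝ) : h i - s * a i ≤ affineSup M h a s :=
  le_csSup (bddAbove_image_sub_mul hh ha s) (mem_image_of_mem _ hi)

theorem bddAbove_image_div (hh : BddAbove (h '' M)) (ha : ∀ i ∈ M, a i ∈ Icc c C)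
    (hc : 0 < c) : BddAbove ((fun i => h i / a i) '' M) := by
  obtain ⟨H, hH⟩ := hh
  refine ⟨max H 0 / c, forall_mem_image.2 fun i hi => ?_⟩
  have hci := (ha i hi).1
  rcases le_total (h i) 0 with hhi | hhi
  · exact (div_nonpos_of_nonpos_of_nonneg hhi (by linarith)).trans (by positivity)
  · exact div_le_div₀ (le_max_right _ _) ((hH (mem_image_of_mem h hi)).trans (le_max_left _ _))
      hc hci

theorem affineSup_le_sub
    (hM : M.Nonempty) (hh : BddAbove (h '' M)) (ha : ∀ i ∈ M, a i ∈ Icc c C)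
    {s t : ℝ} (hst : s ≤ t) :
    affineSup M h a t ≤ affineSup M h a s - (t - s) * c :=
  csSup_le (hM.image _) <| forall_mem_image.2 fun i hi => by
    have := sub_mul_le_affineSup hh ha hi s
    nlinarith [(ha i hi).1]

theorem affineSup_le_add
    (hM : M.Nonempty) (hh : BddAbove (h '' M)) (ha : ∀ i ∈ M, a i ∈ Icc c C)
    {s t : ℝ} (hst : s ≤ t) :
    affineSup M h a s ≤ affineSup M h a t + (t - s) * C :=
  csSup_le (hM.image _) <| forall_mem_image.2 fun i hi => by
    have := sub_mul_le_affineSup hh ha hi t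
    nlinarith [(ha i hi).2]

theorem strictAnti_affineSup
    (hM : M.Nonempty) (hh : BddAbove (h '' M)) (ha : ∀ i ∈ M, a i ∈ Icc c C)
    (hc : 0 < c) : StrictAnti (affineSup M h a) := fun s t hst => by
  have := affineSup_le_sub hM hh ha hst.le
  nlinarith

theorem lipschitzWith_affineSup
    (hM : M.Nonempty) (hh : BddAbove (h '' M)) (ha : ∀ i ∈ M, a i ∈ Icc c C)
    (hc : 0 ≤ c) : LipschitzWith C.toNNReal (affineSup M h a) := by
  obtain ⟨i, hi⟩ := hM
  have hcC : c ≤ C := (ha i hi).1.trans (ha i hi).2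
  refine LipschitzWith.of_le_add_mul' C fun s t => ?_
  rw [Real.dist_eq]
  rcases le_total s t with hst | hst
  · have := affineSup_le_add ⟨i, hi⟩ hh ha hst
    rw [abs_of_nonpos (by linarith)]
    linarith
  · have := affineSup_le_sub ⟨i, hi⟩ hh ha hst
    rw [abs_of_nonneg (by linarith)]
    nlinarith

theorem tendsto_affineSup_atTop
    (hM : M.Nonempty) (hh : BddAbove (h '' M)) (ha : ∀ i ∈ M, a i ∈ Icc c C)
    (hc : 0 < c) : Tendsto (affineSup M h a) atTop atBot := by
  refine tendsto_atBot_mono' atTop ?_ <|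
    tendsto_atBot_add_const_left atTop (affineSup M h a 0)
      (tendsto_neg_atTop_atBot.comp (tendsto_id.atTop_mul_const hc))
  filter_upwards [eventually_ge_atTop 0] with s hs
  have := affineSup_le_sub hM hh ha hs
  simp only [Function.comp_apply, id, sub_zero] at this ⊢
  linarith

theorem tendsto_affineSup_atBot
    (hM : M.Nonempty) (hh : BddAbove (h '' M)) (ha : ∀ i ∈ M, a i ∈ Icc c C)
    (hc : 0 < c) : Tendsto (affineSup M h a) atBot atTop := by
  refine tendsto_atTop_mono' atBot ?_ <|
    tendsto_atTop_add_const_left atBot (affineSup M h a 0)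
      (tendsto_neg_atBot_atTop.atTop_mul_const hc)
  filter_upwards [eventually_le_atBot 0] with s hs
  have := affineSup_le_sub hM hh ha hs
  simp only [zero_sub] at this ⊢
  linarith

theorem existsUnique_affineSup_eq
    (hM : M.Nonempty) (hh : BddAbove (h '' M)) (ha : ∀ i ∈ M, a i ∈ Icc c C)
    (hc : 0 < c) (y : ℝ) : ∃! s, affineSup M h a s = y := by
  obtain ⟨s, hs⟩ := ((lipschitzWith_affineSup hM hh ha hc.le).continuous.surjective'
    (tendsto_affineSup_atBot hM hh ha hc) (tendsto_affineSup_atTop hM hh ha hc)) y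
  exact ⟨s, hs, fun t ht => (strictAnti_affineSup hM hh ha hc).injective (ht.trans hs.symm)⟩

theorem affineSup_pos_of_lt_sSup_div
    (hM : M.Nonempty) (hh : BddAbove (h '' M)) (ha : ∀ i ∈ M, a i ∈ Icc c C)
    (hc : 0 < c) {s : ℝ}
    (hs : s < sSup ((fun i => h i / a i) '' M)) : 0 < affineSup M h a s := by
  obtain ⟨_, ⟨i, hi, rfl⟩, hsi⟩ := exists_lt_of_lt_csSup (hM.image _) hs
  have := (lt_div_iff₀ (hc.trans_le (ha i hi).1)).1 hsi
  linarith [sub_mul_le_affineSup hh ha hi s]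

theorem affineSup_sSup_div
    (hM : M.Nonempty) (hh : BddAbove (h '' M)) (ha : ∀ i ∈ M, a i ∈ Icc c C)
    (hc : 0 < c) :
    affineSup M h a (sSup ((fun i => h i / a i) '' M)) = 0 := by
  set s₀ := sSup ((fun i => h i / a i) '' M)
  refine le_antisymm (csSup_le (hM.image _) <| forall_mem_image.2 fun i hi => ?_) ?_
  · have := (div_le_iff₀ (hc.trans_le (ha i hi).1)).1 <|
      le_csSup (bddAbove_image_div hh ha hc) (mem_image_of_mem _ hi)
    linarith
  · have hcont := (lipschitzWith_affineSup hM hh ha hc.le).continuous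
    refine ge_of_tendsto (x := 𝓝[<] s₀) (hcont.tendsto s₀ |>.mono_left nhdsWithin_le_nhds) ?_
    exact eventually_nhdsWithin_of_forall fun s hs =>
      (affineSup_pos_of_lt_sSup_div hM hh ha hc hs).le

end AffineSup

section Measures

variable {X : Type*} [MeasurableSpace X]

def invariantProbMeasures (T : X → X) : Set (Measure X) :=
  {μ | IsProbabilityMeasure μ ∧ MeasurePreserving T μ μ}

theorem setOf_invariant_eq_image (T : X → X) (f : Measure X → ℝ) :
    {r : ℝ | ∃ μ : Measure X, IsProbabilityMeasure μ ∧ MeasurePreserving T μ μ ∧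
      r = f μ} = f '' invariantProbMeasures T := by
  ext r
  simp only [mem_ofPred_eq, mem_image, invariantProbMeasures, and_assoc, eq_comm]

theorem PtopVar_neg_mul_eq_affineSup (T : X → X) (φ : X → ℝ) (s : ℝ) :
    PtopVar T (fun x => -s * φ x) =
      affineSup (invariantProbMeasures T) (kolSinai T) (fun μ => ∫ x, φ x ∂μ) s := by
  simp only [PtopVar, integral_neg, integral_const_mul, setOf_invariant_eq_image, affineSup,
    neg_mul, sub_eq_add_neg]

theorem integral_mem_Icc {μ : Measure X} [IsProbabilityMeasure μ] {φ : X → ℝ}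
    (hφ : Integrable φ μ) {c C : ℝ} (hc : ∀ x, c ≤ φ x) (hC : ∀ x, φ x ≤ C) :
    ∫ x, φ x ∂μ ∈ Icc c C := by
  constructor
  · simpa using integral_mono (integrable_const c) hφ hc
  · simpa using integral_mono hφ (integrable_const C) hC

end Measures

theorem stmt16_general {X : Type*} [MetricSpace X] [CompactSpace X]
    [MeasurableSpace X] [BorelSpace X]
    (T : X → X)
    (φ : X → ℝ) (hφ : Continuous φ) (c : ℝ) (hc : 0 < c) (hcφ : ∀ x, c ≤ φ x)
    -- existence of an invariant probability measure (Krylov–Bogolyubov)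
    (hex : ∃ μ : Measure X, IsProbabilityMeasure μ ∧ MeasurePreserving T μ μ)
    -- finiteness of the topological entropy `h_top(T) = sup_μ h_μ(T)`
    (hfin : BddAbove {r : ℝ | ∃ μ : Measure X, IsProbabilityMeasure μ ∧
      MeasurePreserving T μ μ ∧ r = kolSinai T μ}) :
    StrictAnti (fun s : ℝ => PtopVar T (fun x => -s * φ x)) ∧
    Continuous (fun s : ℝ => PtopVar T (fun x => -s * φ x)) ∧
    Tendsto (fun s : ℝ => PtopVar T (fun x => -s * φ x)) atTop atBot ∧
    Tendsto (fun s : ℝ => PtopVar T (fun x => -s * φ x)) atBot atTop ∧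
    (0 ≤ sSup {r : ℝ | ∃ μ : Measure X, IsProbabilityMeasure μ ∧
        MeasurePreserving T μ μ ∧ r = kolSinai T μ} →
      ∃! s : ℝ, PtopVar T (fun x => -s * φ x) = 0) ∧
    (0 < sSup {r : ℝ | ∃ μ : Measure X, IsProbabilityMeasure μ ∧
        MeasurePreserving T μ μ ∧ r = kolSinai T μ} →
      PtopVar T (fun x => -(sSup {r : ℝ | ∃ μ : Measure X, IsProbabilityMeasure μ ∧
        MeasurePreserving T μ μ ∧ r = kolSinai T μ / ∫ x, φ x ∂μ}) * φ x) = 0) := by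
  obtain ⟨C, hC⟩ := (isCompact_range hφ).bddAbove
  have ha : ∀ μ ∈ invariantProbMeasures T, ∫ x, φ x ∂μ ∈ Icc c C := fun μ ⟨_, _⟩ =>
    integral_mem_Icc (hφ.integrable_of_hasCompactSupport (.of_compactSpace φ)) hcφ
      fun x => hC (mem_range_self x)
  have hM : (invariantProbMeasures T).Nonempty := hex
  simp only [PtopVar_neg_mul_eq_affineSup, setOf_invariant_eq_image] at hfin ⊢
  exact ⟨strictAnti_affineSup hM hfin ha hc,
    (lipschitzWith_affineSup hM hfin ha hc.le).continuous,
    tendsto_affineSup_atTop hM hfin ha hc, tendsto_affineSup_atBot hM hfin ha hc,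
    fun _ => existsUnique_affineSup_eq hM hfin ha hc 0,
    fun _ => affineSup_sSup_div hM hfin ha hc⟩

/-- for continuous `φ ≥ c > 0` on a compact space with `h_top(T)` finite,
the map `s ↦ P_top(-sφ)` is strictly decreasing, continuous, tends to `-∞` at `+∞` and
to `+∞` at `-∞`; hence Bowen's equation `P_top(-sφ) = 0` has a unique solution when
`h_top(T) ≥ 0`, and this solution is `sup { h_μ(T)/∫φ dμ }` when `h_top(T) > 0`. -/
theorem stmt16 {X : Type*} [MetricSpace X] [CompactSpace X] [Nonempty X]
    [MeasurableSpace X] [BorelSpace X]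
    (T : X → X) (hT : Continuous T)
    (φ : X → ℝ) (hφ : Continuous φ) (c : ℝ) (hc : 0 < c) (hcφ : ∀ x, c ≤ φ x)
    -- existence of an invariant probability measure (Krylov–Bogolyubov)
    (hex : ∃ μ : Measure X, IsProbabilityMeasure μ ∧ MeasurePreserving T μ μ)
    -- finiteness of the topological entropy `h_top(T) = sup_μ h_μ(T)`
    (hfin : BddAbove {r : ℝ | ∃ μ : Measure X, IsProbabilityMeasure μ ∧
      MeasurePreserving T μ μ ∧ r = kolSinai T μ}) :
    StrictAnti (fun s : ℝ => PtopVar T (fun x => -s * φ x)) ∧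
    Continuous (fun s : ℝ => PtopVar T (fun x => -s * φ x)) ∧
    Tendsto (fun s : ℝ => PtopVar T (fun x => -s * φ x)) atTop atBot ∧
    Tendsto (fun s : ℝ => PtopVar T (fun x => -s * φ x)) atBot atTop ∧
    (0 ≤ sSup {r : ℝ | ∃ μ : Measure X, IsProbabilityMeasure μ ∧
        MeasurePreserving T μ μ ∧ r = kolSinai T μ} →
      ∃! s : ℝ, PtopVar T (fun x => -s * φ x) = 0) ∧
    (0 < sSup {r : ℝ | ∃ μ : Measure X, IsProbabilityMeasure μ ∧
        MeasurePreserving T μ μ ∧ r = kolSinai T μ} →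
      PtopVar T (fun x => -(sSup {r : ℝ | ∃ μ : Measure X, IsProbabilityMeasure μ ∧
        MeasurePreserving T μ μ ∧ r = kolSinai T μ / ∫ x, φ x ∂μ}) * φ x) = 0) :=
  stmt16_general T φ hφ c hc hcφ hex hfin
end

section
/- In the construction of the fractal F: if μ_{k+p}(B_n(q,ε)) > 0 then any two points z(x̄, x̄_{k+1}), z(ȳ, ȳ_{k+1}) of P_{k+p} lying in the Bowen ball B_n(q, ε) agree in their first coordinates: x̄ = ȳ and the first j entries of x̄_{k+1} and ȳ_{k+1} coincide, where j is determined by t_k + Δ_j^{k+1} ≤ n < t_k + Δ_{j+1}^{k+1}. Consequently μ_{k+p}(B_n(q,ε)) ≤ (1/(κ_k 𝓜_{k+1}^j)) · exp{S_n φ(q) + 2n·Var(φ,2ε) + ‖φ‖·b_n}. -/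
open Set Metric Filter MeasureTheory
open scoped ENNReal NNReal

noncomputable section

/-- The supremum norm `‖φ‖`. -/
def supNorm {X : Type*} (φ : X → ℝ) : ℝ := ⨆ x, |φ x|

/-- `Var(φ, δ) = sup { |φ(x) - φ(y)| : d(x,y) ≤ δ }`. -/
def varAt {X : Type*} [PseudoMetricSpace X] (φ : X → ℝ) (δ : ℝ) : ℝ :=
  sSup {v : ℝ | ∃ x y : X, dist x y ≤ δ ∧ v = |φ x - φ y|}

/-- in the construction of the fractal `F`, two points of `P_{k+p}` lying
in the same Bowen ball `B_n(q,ε)` agree in their first coordinates (all of stages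
`< k` and the first `j` entries of stage `k`), and consequently
`μ_{k+p}(B_n(q,ε)) ≤ (κ_k 𝓜_{k+1}^j)⁻¹ exp{S_nφ(q) + 2n Var(φ,2ε) + ‖φ‖ b_n}`. -/
theorem stmt18 {X : Type*} [MetricSpace X] [CompactSpace X]
    [MeasurableSpace X] [BorelSpace X]
    (T : X → X) (hT : Continuous T) (φ : X → ℝ) (hφ : Continuous φ)
    (ε : ℝ) (hε : 0 < ε) (m M : ℕ) (hM : 0 < M)
    (k p : ℕ) (hp : 1 ≤ p)
    -- the `(n_i, 9ε)`-separated sets `S_i` and the block data of the construction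
    (S : ℕ → Finset X) (nn N : ℕ → ℕ)
    (hS : ∀ i, (S i).Nonempty) (hN : ∀ i, 1 ≤ N i) (hnM : ∀ i, M ≤ nn i)
    (hsep : ∀ i, ∀ x ∈ S i, ∀ y ∈ S i, x ≠ y → ∃ u < nn i, 9 * ε ≤ dist (T^[u] x) (T^[u] y))
    (c : ℕ → ℕ) (hc : ∀ i, c i = (nn i + M - 1) / M)
    (nhat : ℕ → ℕ) (hnhat : ∀ i, nhat i = nn i + (c i - 1) * (2 * m + 1))
    (t : ℕ → ℕ) (ht : ∀ i, t i = ∑ i' ∈ Finset.range i, N i' * (nhat i' + m))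
    (start : ℕ → ℕ → ℕ) (hstart : ∀ i l, start i l = t i + l * (nhat i + m))
    (blk : ℕ → ℕ → ℕ)
    (hblk : ∀ i jj, blk i jj = if jj + 1 < c i then M else nn i - (c i - 1) * M)
    -- the points `z(x̄₁,…,x̄_{k+p}) ∈ P_{k+p}` shadowing the concatenated orbit segments
    (z : (∀ i : Fin (k + p), Fin (N i.1) → {x // x ∈ S i.1}) → X)
    (hz : ∀ a : ∀ i : Fin (k + p), Fin (N i.1) → {x // x ∈ S i.1},
      ∀ (i : Fin (k + p)) (l : Fin (N i.1)), ∀ jj < c i.1, ∀ s < blk i.1 jj,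
        dist (T^[start i.1 l.1 + jj * (M + 2 * m + 1) + s] (z a))
          (T^[jj * M + s] ((a i l : X))) < ε)
    -- the Bowen ball `B_n(q,ε)` and the index `j` with `t_k + Δ_j ≤ n < t_k + Δ_{j+1}`
    (n j : ℕ) (q : X) (hj : j < N k)
    (hn1 : t k + j * (nhat k + m) ≤ n + m) (hn2 : n + m < t k + (j + 1) * (nhat k + m))
    -- the weights `𝓛`, the normalising constants `𝓜_i`, `κ`, and the measure `μ_{k+p}`
    (L : (∀ i : Fin (k + p), Fin (N i.1) → {x // x ∈ S i.1}) → ℝ)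
    (hL : ∀ a, L a = ∏ i : Fin (k + p), ∏ l : Fin (N i.1),
      Real.exp (birkhoff T φ (nn i.1) ((a i l : X))))
    (Mnorm : ℕ → ℝ) (hMnorm : ∀ i, Mnorm i = ∑ x ∈ S i, Real.exp (birkhoff T φ (nn i) x))
    (κ : ℝ) (hκ : κ = ∏ i ∈ Finset.range k, (Mnorm i) ^ (N i))
    (κK : ℝ) (hκK : κK = ∏ i ∈ Finset.range (k + p), (Mnorm i) ^ (N i))
    (μ : Measure X)
    (hμ : μ = (ENNReal.ofReal κK)⁻¹ •
      ∑ a : ∀ i : Fin (k + p), Fin (N i.1) → {x // x ∈ S i.1},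
        ENNReal.ofReal (L a) • Measure.dirac (z a))
    -- `b_n = n - n_rel`, where `n_rel` counts the times `< n` which shadow the
    -- separated points of the coordinates fixed by the Bowen ball
    (b : ℕ)
    (hb : b = n - ((Finset.range n).filter (fun u =>
      ∃ (i : Fin (k + p)) (l : Fin (N i.1)),
        (i.1 < k ∨ (i.1 = k ∧ l.1 < j)) ∧ ∃ jj < c i.1, ∃ s < blk i.1 jj,
          u = start i.1 l.1 + jj * (M + 2 * m + 1) + s)).card)
    (hpos : μ (bowenBall T n q ε) ≠ 0) :
    (∀ a a' : ∀ i : Fin (k + p), Fin (N i.1) → {x // x ∈ S i.1},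
      z a ∈ bowenBall T n q ε → z a' ∈ bowenBall T n q ε →
        (∀ i : Fin (k + p), i.1 < k → a i = a' i) ∧
        (∀ (i : Fin (k + p)) (l : Fin (N i.1)), i.1 = k → l.1 < j → a i l = a' i l)) ∧
    μ (bowenBall T n q ε) ≤ ENNReal.ofReal ((κ * (Mnorm k) ^ j)⁻¹ *
      Real.exp (birkhoff T φ n q + 2 * n * varAt φ (2 * ε) + supNorm φ * b)) := by
  classical
  -- ### arithmetic facts about `c`
  have hc1 : ∀ i, 1 ≤ c i ∧ nn i ≤ c i * M ∧ (c i - 1) * M + 1 ≤ nn i := by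
    intro i
    have h3 := hnM i
    have h1 : (nn i + M - 1) / M * M + (nn i + M - 1) % M = nn i + M - 1 :=
      Nat.div_add_mod' _ _
    have h2 : (nn i + M - 1) % M < M := Nat.mod_lt _ hM
    have h4 : ((nn i + M - 1) / M = 0 ∧ (nn i + M - 1) / M * M = 0) ∨
        (1 ≤ (nn i + M - 1) / M ∧
          ((nn i + M - 1) / M - 1) * M + M = (nn i + M - 1) / M * M) := by
      rcases Nat.eq_zero_or_pos ((nn i + M - 1) / M) with h | h
      · exact Or.inl ⟨h, by rw [h, Nat.zero_mul]⟩
      · refine Or.inr ⟨h, ?_⟩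
        calc ((nn i + M - 1) / M - 1) * M + M = (((nn i + M - 1) / M - 1) + 1) * M := by ring
          _ = (nn i + M - 1) / M * M := by rw [Nat.sub_add_cancel h]
    rw [hc i]
    omega
  -- ### canonical block decomposition of a time `u0 < nn i`
  have decomp : ∀ iv u0, u0 < nn iv →
      min (u0 / M) (c iv - 1) < c iv ∧
      min (u0 / M) (c iv - 1) * M ≤ u0 ∧
      u0 - min (u0 / M) (c iv - 1) * M < blk iv (min (u0 / M) (c iv - 1)) := by
    intro iv u0 hu0
    obtain ⟨k1, k2, k3⟩ := hc1 iv
    have h1 : u0 / M * M + u0 % M = u0 := Nat.div_add_mod' _ _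
    have h2 : u0 % M < M := Nat.mod_lt _ hM
    rw [hblk]
    rcases le_or_gt (u0 / M) (c iv - 1) with h | h
    · rw [min_eq_left h]
      split_ifs with hif
      · omega
      · have he : u0 / M = c iv - 1 := by omega
        rw [he] at h1 ⊢
        omega
    · rw [min_eq_right h.le]
      have hmm : (c iv - 1) * M ≤ u0 / M * M := Nat.mul_le_mul h.le le_rfl
      have hcc : ¬ (c iv - 1 + 1 < c iv) := by omega
      rw [if_neg hcc]
      omega
  -- ### converse: any admissible pair `(jj, s)` comes from the canonical decomposition
  have claimK : ∀ iv, ∀ jj, jj < c iv → ∀ s, s < blk iv jj →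
      jj * M + s < nn iv ∧ s < M ∧ min ((jj * M + s) / M) (c iv - 1) = jj := by
    intro iv jj hjj s hs
    obtain ⟨k1, k2, k3⟩ := hc1 iv
    have e2 : (c iv - 1) * M + M = c iv * M := by
      calc (c iv - 1) * M + M = (c iv - 1 + 1) * M := by ring
        _ = c iv * M := by rw [Nat.sub_add_cancel k1]
    rw [hblk] at hs
    have hjc : jj ≤ c iv - 1 := by omega
    have e3 : jj * M ≤ (c iv - 1) * M := Nat.mul_le_mul hjc le_rfl
    have hsM : s < M := by
      split_ifs at hs
      · exact hs
      · omega
    have hlt : jj * M + s < nn iv := by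
      rcases lt_or_ge (jj + 1) (c iv) with h | h
      · have e4 : (jj + 1) * M ≤ (c iv - 1) * M := Nat.mul_le_mul (by omega) le_rfl
        have e5 : (jj + 1) * M = jj * M + M := by ring
        omega
      · have hjeq : jj = c iv - 1 := by omega
        rw [if_neg (by omega)] at hs
        rw [hjeq]
        omega
    refine ⟨hlt, hsM, ?_⟩
    have hdiv : (jj * M + s) / M = jj := by
      rw [Nat.mul_comm jj M, Nat.mul_add_div hM, Nat.div_eq_of_lt hsM, Nat.add_zero]
    rw [hdiv]
    exact min_eq_left hjc
  -- ### the shift inside a segment is less than `nhat`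
  have psilt : ∀ iv u0, u0 < nn iv →
      u0 + min (u0 / M) (c iv - 1) * (2 * m + 1) < nhat iv := by
    intro iv u0 hu0
    have h : min (u0 / M) (c iv - 1) * (2 * m + 1) ≤ (c iv - 1) * (2 * m + 1) :=
      Nat.mul_le_mul (min_le_right _ _) le_rfl
    rw [hnhat]
    omega
  -- ### monotonicity of `t`, basic segment estimates
  have tmono : ∀ a b', a ≤ b' → t a ≤ t b' := by
    intro a b' hab
    rw [ht, ht]
    exact Finset.sum_le_sum_of_subset (Finset.range_subset_range.2 hab)
  have htkn : t k ≤ n + m := le_trans (Nat.le_add_right _ _) hn1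
  have hstartle : ∀ (i : Fin (k + p)) (l : Fin (N i.1)),
      start i.1 l.1 + nhat i.1 + m ≤ t (i.1 + 1) := by
    intro i l
    have e1 : t (i.1 + 1) = t i.1 + N i.1 * (nhat i.1 + m) := by
      rw [ht, ht, Finset.sum_range_succ]
    have e2 : (l.1 + 1) * (nhat i.1 + m) ≤ N i.1 * (nhat i.1 + m) :=
      Nat.mul_le_mul l.2 le_rfl
    have e3 : (l.1 + 1) * (nhat i.1 + m) = l.1 * (nhat i.1 + m) + (nhat i.1 + m) := by ring
    rw [hstart]
    omega
  have hfixn : ∀ (i : Fin (k + p)) (l : Fin (N i.1)),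
      (i.1 < k ∨ (i.1 = k ∧ l.1 < j)) → start i.1 l.1 + nhat i.1 ≤ n := by
    intro i l hP
    rcases hP with h | ⟨h1, h2⟩
    · have e1 := hstartle i l
      have e2 := tmono (i.1 + 1) k h
      omega
    · have e2 : (l.1 + 1) * (nhat k + m) ≤ j * (nhat k + m) := Nat.mul_le_mul h2 le_rfl
      have e3 : (l.1 + 1) * (nhat k + m) = l.1 * (nhat k + m) + (nhat k + m) := by ring
      have e4 : t i.1 = t k := by rw [h1]
      have e5 : nhat i.1 = nhat k := by rw [h1]
      have e6 : l.1 * (nhat i.1 + m) = l.1 * (nhat k + m) := by rw [e5]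
      rw [hstart]
      omega
  -- ### two points of `P_{k+p}` in the Bowen ball agree on the fixed coordinates
  have agree : ∀ a a', z a ∈ bowenBall T n q ε → z a' ∈ bowenBall T n q ε →
      ∀ (i : Fin (k + p)) (l : Fin (N i.1)),
        (i.1 < k ∨ (i.1 = k ∧ l.1 < j)) → a i l = a' i l := by
    intro a a' ha ha' i l hP
    by_contra hne
    obtain ⟨u0, hu0, hdist⟩ :=
      hsep i.1 _ (a i l).2 _ (a' i l).2 (fun h => hne (Subtype.ext h))
    obtain ⟨d1, d2, d3⟩ := decomp i.1 u0 hu0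
    have hz1 := hz a i l _ d1 _ d3
    have hz2 := hz a' i l _ d1 _ d3
    have e0 : min (u0 / M) (c i.1 - 1) * M + (u0 - min (u0 / M) (c i.1 - 1) * M) = u0 := by
      omega
    rw [e0] at hz1 hz2
    have e1 : start i.1 l.1 + min (u0 / M) (c i.1 - 1) * (M + 2 * m + 1) +
        (u0 - min (u0 / M) (c i.1 - 1) * M)
        = start i.1 l.1 + u0 + min (u0 / M) (c i.1 - 1) * (2 * m + 1) := by
      have h1 : min (u0 / M) (c i.1 - 1) * (M + 2 * m + 1)
          = min (u0 / M) (c i.1 - 1) * M + min (u0 / M) (c i.1 - 1) * (2 * m + 1) := by ring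
      omega
    rw [e1] at hz1 hz2
    have hun : start i.1 l.1 + u0 + min (u0 / M) (c i.1 - 1) * (2 * m + 1) < n := by
      have p1 := psilt i.1 u0 hu0
      have p2 := hfixn i l hP
      omega
    have hB1 := ha _ hun
    have hB2 := ha' _ hun
    have t1 := dist_triangle4 (T^[u0] ((a i l : X)))
      (T^[start i.1 l.1 + u0 + min (u0 / M) (c i.1 - 1) * (2 * m + 1)] (z a))
      (T^[start i.1 l.1 + u0 + min (u0 / M) (c i.1 - 1) * (2 * m + 1)] q)
      (T^[u0] ((a' i l : X)))
    have t2 := dist_triangle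
      (T^[start i.1 l.1 + u0 + min (u0 / M) (c i.1 - 1) * (2 * m + 1)] q)
      (T^[start i.1 l.1 + u0 + min (u0 / M) (c i.1 - 1) * (2 * m + 1)] (z a'))
      (T^[u0] ((a' i l : X)))
    have c1 := dist_comm (T^[start i.1 l.1 + u0 + min (u0 / M) (c i.1 - 1) * (2 * m + 1)] (z a))
      (T^[u0] ((a i l : X)))
    have c2 := dist_comm (T^[start i.1 l.1 + u0 + min (u0 / M) (c i.1 - 1) * (2 * m + 1)] (z a))
      (T^[start i.1 l.1 + u0 + min (u0 / M) (c i.1 - 1) * (2 * m + 1)] q)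
    linarith
  refine ⟨fun a a' ha ha' => ⟨fun i hik => funext fun l => agree a a' ha ha' i l (Or.inl hik),
      fun i l hik hlj => agree a a' ha ha' i l (Or.inr ⟨hik, hlj⟩)⟩, ?_⟩
  -- ## the measure bound
  set B := bowenBall T n q ε with hBdef
  have hLnn : ∀ a, 0 ≤ L a := by
    intro a
    rw [hL]
    exact Finset.prod_nonneg fun i _ => Finset.prod_nonneg fun l _ => (Real.exp_pos _).le
  have hsum : (∑ a, ENNReal.ofReal (L a) • Measure.dirac (z a)) B
      = ∑ a, ENNReal.ofReal (if z a ∈ B then L a else 0) := by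
    rw [Measure.finset_sum_apply]
    refine Finset.sum_congr rfl fun a _ => ?_
    rw [Measure.smul_apply, smul_eq_mul, Measure.dirac_apply]
    by_cases hzb : z a ∈ B
    · simp [hzb, Set.indicator_of_mem]
    · simp [hzb, Set.indicator_of_notMem]
  have hμB : μ B = (ENNReal.ofReal κK)⁻¹ *
      ENNReal.ofReal (∑ a, if z a ∈ B then L a else 0) := by
    rw [hμ, Measure.smul_apply, smul_eq_mul, hsum,
      ENNReal.ofReal_sum_of_nonneg (fun a _ => by
        split_ifs
        · exact hLnn a
        · exact le_rfl)]
  have hex : ∃ a, z a ∈ B := by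
    by_contra hno
    push_neg at hno
    apply hpos
    have hzero : (∑ a, if z a ∈ B then L a else 0) = 0 :=
      Finset.sum_eq_zero fun a _ => if_neg (hno a)
    rw [hμB, hzero, ENNReal.ofReal_zero, mul_zero]
  obtain ⟨a0, ha0⟩ := hex
  -- ### facts about `supNorm` and `varAt`
  have hbdd : BddAbove (Set.range fun x : X => |φ x|) :=
    (isCompact_range (continuous_abs.comp hφ)).bddAbove
  have hsup : ∀ x, |φ x| ≤ supNorm φ := fun x => le_ciSup hbdd x
  have hsup0 : 0 ≤ supNorm φ := le_trans (abs_nonneg _) (hsup q)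
  have hVbdd : BddAbove {v : ℝ | ∃ x y : X, dist x y ≤ 2 * ε ∧ v = |φ x - φ y|} := by
    refine ⟨2 * supNorm φ, ?_⟩
    rintro v ⟨x, y, -, rfl⟩
    have h1 : |φ x - φ y| ≤ |φ x| + |φ y| := by
      have := abs_add_le (φ x) (-φ y)
      simpa [sub_eq_add_neg] using this
    linarith [hsup x, hsup y]
  have hVar0 : 0 ≤ varAt φ (2 * ε) :=
    le_csSup hVbdd ⟨q, q, by rw [dist_self]; linarith, by rw [sub_self, abs_zero]⟩
  have hVarle : ∀ x y : X, dist x y ≤ 2 * ε → |φ x - φ y| ≤ varAt φ (2 * ε) :=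
    fun x y h => le_csSup hVbdd ⟨x, y, h, rfl⟩
  -- ### the index sets and the time-injection `U`
  set Fx : Finset ((i : Fin (k + p)) × Fin (N i.1)) :=
    Finset.univ.filter (fun x => x.1.1 < k ∨ (x.1.1 = k ∧ x.2.1 < j)) with hFxdef
  set U : ((_ : (i : Fin (k + p)) × Fin (N i.1)) × ℕ) → ℕ :=
    fun w => start w.1.1.1 w.1.2.1 + w.2 + min (w.2 / M) (c w.1.1.1 - 1) * (2 * m + 1)
    with hUdef
  set D : Finset ((_ : (i : Fin (k + p)) × Fin (N i.1)) × ℕ) :=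
    Fx.sigma (fun x => Finset.range (nn x.1.1)) with hDdef
  set G := (Finset.range n).filter (fun u =>
      ∃ (i : Fin (k + p)) (l : Fin (N i.1)),
        (i.1 < k ∨ (i.1 = k ∧ l.1 < j)) ∧ ∃ jj < c i.1, ∃ s < blk i.1 jj,
          u = start i.1 l.1 + jj * (M + 2 * m + 1) + s) with hGdef
  have hUD : ∀ x ∈ Fx, ∀ u0 < nn x.1.1,
      start x.1.1 x.2.1 ≤ U ⟨x, u0⟩ ∧ U ⟨x, u0⟩ < start x.1.1 x.2.1 + nhat x.1.1 ∧
        U ⟨x, u0⟩ < n := by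
    intro x hx u0 hu0
    rw [hFxdef, Finset.mem_filter] at hx
    have hp1 := psilt x.1.1 u0 hu0
    have hp2 := hfixn x.1 x.2 hx.2
    simp only [hUdef]
    try dsimp only
    omega
  have hord : ∀ x y : (i : Fin (k + p)) × Fin (N i.1),
      (x.1.1 < y.1.1 ∨ (x.1.1 = y.1.1 ∧ x.2.1 < y.2.1)) →
      start x.1.1 x.2.1 + nhat x.1.1 ≤ start y.1.1 y.2.1 := by
    intro x y hxy
    obtain ⟨i, l⟩ := x
    obtain ⟨i', l'⟩ := y
    dsimp only at hxy ⊢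
    rcases hxy with h | ⟨h1, h2⟩
    · have e1 := hstartle i l
      have e2 := tmono (i.1 + 1) i'.1 h
      have e3 : t i'.1 ≤ start i'.1 l'.1 := by
        rw [hstart]
        exact Nat.le_add_right _ _
      omega
    · try simp only at h1 h2
      have e4 : t i.1 = t i'.1 := by rw [h1]
      have e5 : nhat i.1 = nhat i'.1 := by rw [h1]
      have e2 : (l.1 + 1) * (nhat i'.1 + m) ≤ l'.1 * (nhat i'.1 + m) :=
        Nat.mul_le_mul h2 le_rfl
      have e3 : (l.1 + 1) * (nhat i'.1 + m) = l.1 * (nhat i'.1 + m) + (nhat i'.1 + m) := by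
        ring
      have e6 : l.1 * (nhat i.1 + m) = l.1 * (nhat i'.1 + m) := by rw [e5]
      rw [hstart, hstart]
      try simp only
      omega
  have hinj : ∀ w ∈ D, ∀ w' ∈ D, U w = U w' → w = w' := by
    rintro ⟨x, u0⟩ hw ⟨x', u0'⟩ hw' he
    rw [hDdef, Finset.mem_sigma, Finset.mem_range] at hw hw'
    obtain ⟨b1, b2, b3⟩ := hUD x hw.1 u0 hw.2
    obtain ⟨b1', b2', b3'⟩ := hUD x' hw'.1 u0' hw'.2
    have hxx : x = x' := by
      by_contra hne
      rcases Nat.lt_trichotomy x.1.1 x'.1.1 with h | h | h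
      · have := hord x x' (Or.inl h); omega
      · rcases Nat.lt_trichotomy x.2.1 x'.2.1 with h' | h' | h'
        · have := hord x x' (Or.inr ⟨h, h'⟩); omega
        · apply hne
          obtain ⟨i, l⟩ := x
          obtain ⟨i', l'⟩ := x'
          simp only at h h'
          have hii : i = i' := Fin.ext h
          subst hii
          have hll : l = l' := Fin.ext h'
          subst hll
          rfl
        · have := hord x' x (Or.inr ⟨h.symm, h'⟩); omega
      · have := hord x' x (Or.inl h); omega
    subst hxx
    have hUeq : u0 + min (u0 / M) (c x.1.1 - 1) * (2 * m + 1)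
        = u0' + min (u0' / M) (c x.1.1 - 1) * (2 * m + 1) := by
      simp only [hUdef] at he
      try dsimp only at he
      omega
    have huu : u0 = u0' := by
      rcases Nat.lt_trichotomy u0 u0' with h | h | h
      · have hm2 : min (u0 / M) (c x.1.1 - 1) * (2 * m + 1)
            ≤ min (u0' / M) (c x.1.1 - 1) * (2 * m + 1) :=
          Nat.mul_le_mul (min_le_min (Nat.div_le_div_right h.le) le_rfl) le_rfl
        omega
      · exact h
      · have hm2 : min (u0' / M) (c x.1.1 - 1) * (2 * m + 1)
            ≤ min (u0 / M) (c x.1.1 - 1) * (2 * m + 1) :=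
          Nat.mul_le_mul (min_le_min (Nat.div_le_div_right h.le) le_rfl) le_rfl
        omega
    subst huu
    rfl
  have himage : D.image U = G := by
    ext u
    simp only [Finset.mem_image]
    constructor
    · rintro ⟨⟨x, u0⟩, hw, rfl⟩
      rw [hDdef, Finset.mem_sigma, Finset.mem_range] at hw
      obtain ⟨hx, hu0⟩ := hw
      obtain ⟨-, -, hlt⟩ := hUD x hx u0 hu0
      rw [hFxdef, Finset.mem_filter] at hx
      obtain ⟨d1, d2, d3⟩ := decomp x.1.1 u0 hu0
      rw [hGdef, Finset.mem_filter, Finset.mem_range]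
      refine ⟨hlt, x.1, x.2, hx.2, min (u0 / M) (c x.1.1 - 1), d1,
        u0 - min (u0 / M) (c x.1.1 - 1) * M, d3, ?_⟩
      have h1 : min (u0 / M) (c x.1.1 - 1) * (M + 2 * m + 1)
          = min (u0 / M) (c x.1.1 - 1) * M + min (u0 / M) (c x.1.1 - 1) * (2 * m + 1) := by
        ring
      simp only [hUdef]
      try dsimp only
      omega
    · rw [hGdef, Finset.mem_filter, Finset.mem_range]
      rintro ⟨hun, i, l, hP, jj, hjj, s, hs, rfl⟩
      obtain ⟨c1', c2', c3'⟩ := claimK i.1 jj hjj s hs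
      refine ⟨⟨⟨i, l⟩, jj * M + s⟩, ?_, ?_⟩
      · rw [hDdef, Finset.mem_sigma, Finset.mem_range]
        exact ⟨by rw [hFxdef, Finset.mem_filter]; exact ⟨Finset.mem_univ _, hP⟩, c1'⟩
      · simp only [hUdef]
        try dsimp only
        rw [c3']
        have h1 : jj * (M + 2 * m + 1) = jj * M + jj * (2 * m + 1) := by ring
        omega
  have hGsub : G ⊆ Finset.range n := by
    rw [hGdef]
    exact Finset.filter_subset _ _
  have hcardDG : D.card = G.card := by
    rw [← himage]
    exact (Finset.card_image_of_injOn fun w hw w' hw' he => hinj w hw w' hw' he).symm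
  have hbG : b = n - G.card := hb
  have ha0' : ∀ u' < n, dist (T^[u'] q) (T^[u'] (z a0)) < ε := ha0
  -- ### the pointwise comparison along the orbit of `q`
  have hpoint : ∀ x ∈ Fx, ∀ u0 < nn x.1.1,
      φ (T^[u0] ((a0 x.1 x.2 : X))) ≤ φ (T^[U ⟨x, u0⟩] q) + varAt φ (2 * ε) := by
    intro x hx u0 hu0
    obtain ⟨d1, d2, d3⟩ := decomp x.1.1 u0 hu0
    have hz1 := hz a0 x.1 x.2 _ d1 _ d3
    have e0 : min (u0 / M) (c x.1.1 - 1) * M + (u0 - min (u0 / M) (c x.1.1 - 1) * M)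
        = u0 := by omega
    rw [e0] at hz1
    have e1 : start x.1.1 x.2.1 + min (u0 / M) (c x.1.1 - 1) * (M + 2 * m + 1) +
        (u0 - min (u0 / M) (c x.1.1 - 1) * M) = U ⟨x, u0⟩ := by
      have h1 : min (u0 / M) (c x.1.1 - 1) * (M + 2 * m + 1)
          = min (u0 / M) (c x.1.1 - 1) * M + min (u0 / M) (c x.1.1 - 1) * (2 * m + 1) := by
        ring
      simp only [hUdef]
      try dsimp only
      omega
    rw [e1] at hz1
    obtain ⟨-, -, hun⟩ := hUD x hx u0 hu0
    have hd : dist (T^[u0] ((a0 x.1 x.2 : X))) (T^[U ⟨x, u0⟩] q) ≤ 2 * ε := by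
      have tri := dist_triangle (T^[u0] ((a0 x.1 x.2 : X)))
        (T^[U ⟨x, u0⟩] (z a0)) (T^[U ⟨x, u0⟩] q)
      have c1 := dist_comm (T^[U ⟨x, u0⟩] (z a0)) (T^[u0] ((a0 x.1 x.2 : X)))
      have c2 := dist_comm (T^[U ⟨x, u0⟩] (z a0)) (T^[U ⟨x, u0⟩] q)
      have hB1 := ha0' _ hun
      linarith
    have hv := hVarle _ _ hd
    have habs := le_abs_self (φ (T^[u0] ((a0 x.1 x.2 : X))) - φ (T^[U ⟨x, u0⟩] q))
    linarith
  -- ### the Birkhoff-sum estimate over the fixed coordinates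
  have hGcard_le : G.card ≤ n := by
    have := Finset.card_le_card hGsub
    simpa using this
  have hsumest : ∑ x ∈ Fx, birkhoff T φ (nn x.1.1) ((a0 x.1 x.2 : X))
      ≤ birkhoff T φ n q + 2 * (n : ℝ) * varAt φ (2 * ε) + supNorm φ * (b : ℝ) := by
    have h1 : ∑ x ∈ Fx, birkhoff T φ (nn x.1.1) ((a0 x.1 x.2 : X))
        = ∑ w ∈ D, φ (T^[w.2] ((a0 w.1.1 w.1.2 : X))) := by
      rw [hDdef]
      exact (Finset.sum_sigma Fx (fun x => Finset.range (nn x.1.1))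
        (fun w => φ (T^[w.2] ((a0 w.1.1 w.1.2 : X))))).symm
    have h2 : ∑ w ∈ D, φ (T^[w.2] ((a0 w.1.1 w.1.2 : X)))
        ≤ ∑ w ∈ D, (φ (T^[U w] q) + varAt φ (2 * ε)) := by
      refine Finset.sum_le_sum ?_
      rintro ⟨x, u0⟩ hw
      rw [hDdef, Finset.mem_sigma, Finset.mem_range] at hw
      exact hpoint x hw.1 u0 hw.2
    have h3 : ∑ w ∈ D, (φ (T^[U w] q) + varAt φ (2 * ε))
        = ∑ w ∈ D, φ (T^[U w] q) + (D.card : ℝ) * varAt φ (2 * ε) := by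
      rw [Finset.sum_add_distrib, Finset.sum_const, nsmul_eq_mul]
    have h4 : ∑ w ∈ D, φ (T^[U w] q) = ∑ u ∈ G, φ (T^[u] q) := by
      rw [← himage]
      exact (Finset.sum_image (f := fun u => φ (T^[u] q))
        fun w hw w' hw' he => hinj w hw w' hw' he).symm
    have h5 : ∑ u ∈ Finset.range n \ G, φ (T^[u] q) + ∑ u ∈ G, φ (T^[u] q)
        = ∑ u ∈ Finset.range n, φ (T^[u] q) := Finset.sum_sdiff hGsub
    have h6 : ∀ u ∈ Finset.range n \ G, -(supNorm φ) ≤ φ (T^[u] q) := by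
      intro u _
      have h6a := hsup (T^[u] q)
      have h6b := neg_abs_le (φ (T^[u] q))
      linarith
    have h7 : ((Finset.range n \ G).card : ℝ) * (-(supNorm φ))
        ≤ ∑ u ∈ Finset.range n \ G, φ (T^[u] q) := by
      have := Finset.card_nsmul_le_sum (Finset.range n \ G) _ _ h6
      rwa [nsmul_eq_mul] at this
    have h8 : (Finset.range n \ G).card = b := by
      rw [Finset.card_sdiff_of_subset hGsub, Finset.card_range, hbG]
    rw [h8] at h7
    have h9 : (D.card : ℝ) * varAt φ (2 * ε) ≤ 2 * (n : ℝ) * varAt φ (2 * ε) := by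
      have hcast : (D.card : ℝ) ≤ 2 * (n : ℝ) := by
        rw [hcardDG]
        have : (G.card : ℝ) ≤ (n : ℝ) := Nat.cast_le.2 hGcard_le
        have hn0 : (0 : ℝ) ≤ (n : ℝ) := Nat.cast_nonneg _
        linarith
      exact mul_le_mul_of_nonneg_right hcast hVar0
    have hq : birkhoff T φ n q = ∑ u ∈ Finset.range n, φ (T^[u] q) := rfl
    rw [h1]
    linarith [h2, h3, h4, h5, h7, h9]
  -- ### positivity of the normalising constants
  have hMpos : ∀ i, 0 < Mnorm i := by
    intro i
    rw [hMnorm]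
    exact Finset.sum_pos (fun x _ => Real.exp_pos _) (hS i)
  have hκpos : 0 < κ := by
    rw [hκ]; exact Finset.prod_pos fun i _ => pow_pos (hMpos i) _
  have hκKpos : 0 < κK := by
    rw [hκK]; exact Finset.prod_pos fun i _ => pow_pos (hMpos i) _
  have hMkjpos : 0 < κ * Mnorm k ^ j := mul_pos hκpos (pow_pos (hMpos k) _)
  -- ### the capped weights
  set g : ∀ (i : Fin (k + p)), Fin (N i.1) → {x // x ∈ S i.1} → ℝ :=
    fun i l v => if ((i.1 < k ∨ (i.1 = k ∧ l.1 < j)) → v = a0 i l)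
      then Real.exp (birkhoff T φ (nn i.1) (v : X)) else 0 with hgdef
  have hg0 : ∀ (i : Fin (k + p)) (l : Fin (N i.1)) v, 0 ≤ g i l v := by
    intro i l v
    simp only [hgdef]
    split_ifs
    · exact (Real.exp_pos _).le
    · exact le_rfl
  have hRle : (∑ a, if z a ∈ B then L a else 0)
      ≤ ∑ a : (∀ i : Fin (k + p), Fin (N i.1) → {x // x ∈ S i.1}),
        ∏ i : Fin (k + p), ∏ l : Fin (N i.1), g i l (a i l) := by
    refine Finset.sum_le_sum fun a _ => ?_
    by_cases hzb : z a ∈ B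
    · rw [if_pos hzb, hL]
      refine le_of_eq (Finset.prod_congr rfl fun i _ => Finset.prod_congr rfl fun l _ => ?_)
      simp only [hgdef]
      rw [if_pos (fun hP => (agree a a0 hzb ha0 i l hP))]
    · rw [if_neg hzb]
      exact Finset.prod_nonneg fun i _ => Finset.prod_nonneg fun l _ => hg0 i l _
  have hswap : (∑ a : (∀ i : Fin (k + p), Fin (N i.1) → {x // x ∈ S i.1}),
      ∏ i : Fin (k + p), ∏ l : Fin (N i.1), g i l (a i l))
      = ∏ i : Fin (k + p), ∏ l : Fin (N i.1), ∑ v, g i l v := by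
    have e2 : ∀ i : Fin (k + p), (∏ l : Fin (N i.1), ∑ v, g i l v)
        = ∑ bf : Fin (N i.1) → {x // x ∈ S i.1}, ∏ l, g i l (bf l) := by
      intro i
      have e2a := Finset.prod_univ_sum
        (fun _l : Fin (N i.1) => (Finset.univ : Finset {x // x ∈ S i.1}))
        (fun l v => g i l v)
      rwa [Fintype.piFinset_univ] at e2a
    have e1 := Finset.prod_univ_sum
      (fun i : Fin (k + p) => (Finset.univ : Finset (Fin (N i.1) → {x // x ∈ S i.1})))
      (fun i bf => ∏ l, g i l (bf l))
    rw [Fintype.piFinset_univ] at e1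
    calc (∑ a : (∀ i : Fin (k + p), Fin (N i.1) → {x // x ∈ S i.1}),
          ∏ i : Fin (k + p), ∏ l : Fin (N i.1), g i l (a i l))
        = ∏ i : Fin (k + p), ∑ bf : Fin (N i.1) → {x // x ∈ S i.1}, ∏ l, g i l (bf l) :=
          e1.symm
      _ = ∏ i : Fin (k + p), ∏ l : Fin (N i.1), ∑ v, g i l v :=
          Finset.prod_congr rfl fun i _ => (e2 i).symm
  have hgsum : ∀ (i : Fin (k + p)) (l : Fin (N i.1)), (∑ v, g i l v)
      = if (i.1 < k ∨ (i.1 = k ∧ l.1 < j))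
        then Real.exp (birkhoff T φ (nn i.1) ((a0 i l : X))) else Mnorm i.1 := by
    intro i l
    by_cases hP : (i.1 < k ∨ (i.1 = k ∧ l.1 < j))
    · rw [if_pos hP]
      have hcong : ∀ v : {x // x ∈ S i.1}, g i l v
          = if v = a0 i l then Real.exp (birkhoff T φ (nn i.1) (v : X)) else 0 := by
        intro v
        simp only [hgdef]
        by_cases hv : v = a0 i l
        · rw [if_pos (fun _ => hv), if_pos hv]
        · rw [if_neg (fun hcc => hv (hcc hP)), if_neg hv]
      rw [Finset.sum_congr rfl fun v _ => hcong v]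
      simp [Finset.sum_ite_eq']
    · rw [if_neg hP]
      have hcong : ∀ v : {x // x ∈ S i.1}, g i l v
          = Real.exp (birkhoff T φ (nn i.1) (v : X)) := by
        intro v
        simp only [hgdef]
        exact if_pos (fun hP' => absurd hP' hP)
      rw [Finset.sum_congr rfl fun v _ => hcong v, hMnorm]
      exact Finset.sum_coe_sort (S i.1) (fun x => Real.exp (birkhoff T φ (nn i.1) x))
  -- ### from double products to products over the sigma type
  have hprod_sigma : (∏ i : Fin (k + p), ∏ l : Fin (N i.1),
        (if (i.1 < k ∨ (i.1 = k ∧ l.1 < j))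
          then Real.exp (birkhoff T φ (nn i.1) ((a0 i l : X))) else Mnorm i.1))
      = ∏ x : (i : Fin (k + p)) × Fin (N i.1),
        (if (x.1.1 < k ∨ (x.1.1 = k ∧ x.2.1 < j))
          then Real.exp (birkhoff T φ (nn x.1.1) ((a0 x.1 x.2 : X))) else Mnorm x.1.1) := by
    have e3 := Finset.prod_sigma (Finset.univ : Finset (Fin (k + p)))
      (fun i => (Finset.univ : Finset (Fin (N i.1))))
      (fun x : (i : Fin (k + p)) × Fin (N i.1) =>
        if (x.1.1 < k ∨ (x.1.1 = k ∧ x.2.1 < j))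
          then Real.exp (birkhoff T φ (nn x.1.1) ((a0 x.1 x.2 : X))) else Mnorm x.1.1)
    rw [Finset.univ_sigma_univ] at e3
    exact e3.symm
  have hsplitprod : (∏ x : (i : Fin (k + p)) × Fin (N i.1),
        (if (x.1.1 < k ∨ (x.1.1 = k ∧ x.2.1 < j))
          then Real.exp (birkhoff T φ (nn x.1.1) ((a0 x.1 x.2 : X))) else Mnorm x.1.1))
      = (∏ x ∈ Finset.univ.filter
          (fun x : (i : Fin (k + p)) × Fin (N i.1) =>
            (x.1.1 < k ∨ (x.1.1 = k ∧ x.2.1 < j))),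
          Real.exp (birkhoff T φ (nn x.1.1) ((a0 x.1 x.2 : X)))) *
        ∏ x ∈ Finset.univ.filter
          (fun x : (i : Fin (k + p)) × Fin (N i.1) =>
            ¬(x.1.1 < k ∨ (x.1.1 = k ∧ x.2.1 < j))), Mnorm x.1.1 :=
    Finset.prod_ite _ _
  -- ### the two product identities for the normalising constants
  have hallM : (∏ x : (i : Fin (k + p)) × Fin (N i.1), Mnorm x.1.1) = κK := by
    have e5 := Finset.prod_sigma (Finset.univ : Finset (Fin (k + p)))
      (fun i => (Finset.univ : Finset (Fin (N i.1))))
      (fun x : (i : Fin (k + p)) × Fin (N i.1) => Mnorm x.1.1)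
    rw [Finset.univ_sigma_univ] at e5
    rw [e5]
    have e6 : ∀ i : Fin (k + p),
        (∏ _l : Fin (N i.1), Mnorm i.1) = Mnorm i.1 ^ N i.1 := by
      intro i
      rw [Finset.prod_const, Finset.card_univ, Fintype.card_fin]
    rw [Finset.prod_congr rfl fun i _ => e6 i, hκK]
    exact Fin.prod_univ_eq_prod_range (fun iv => Mnorm iv ^ N iv) (k + p)
  have hfixM : (∏ x ∈ Finset.univ.filter
        (fun x : (i : Fin (k + p)) × Fin (N i.1) =>
          (x.1.1 < k ∨ (x.1.1 = k ∧ x.2.1 < j))), Mnorm x.1.1) = κ * Mnorm k ^ j := by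
    rw [Finset.prod_filter]
    have e5 := Finset.prod_sigma (Finset.univ : Finset (Fin (k + p)))
      (fun i => (Finset.univ : Finset (Fin (N i.1))))
      (fun x : (i : Fin (k + p)) × Fin (N i.1) =>
        if (x.1.1 < k ∨ (x.1.1 = k ∧ x.2.1 < j)) then Mnorm x.1.1 else 1)
    rw [Finset.univ_sigma_univ] at e5
    rw [e5]
    have inner : ∀ i : Fin (k + p),
        (∏ l : Fin (N i.1), if (i.1 < k ∨ (i.1 = k ∧ l.1 < j)) then Mnorm i.1 else 1)
          = if i.1 < k then Mnorm i.1 ^ N i.1 else if i.1 = k then Mnorm k ^ j else 1 := by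
      intro i
      rw [Fin.prod_univ_eq_prod_range
        (fun lv => if (i.1 < k ∨ (i.1 = k ∧ lv < j)) then Mnorm i.1 else 1) (N i.1)]
      rcases Nat.lt_trichotomy i.1 k with h | h | h
      · rw [if_pos h]
        rw [Finset.prod_congr rfl fun lv _ => if_pos (Or.inl h)]
        rw [Finset.prod_const, Finset.card_range]
      · rw [if_neg (by omega), if_pos h, h]
        have hsp : N k = j + (N k - j) := by omega
        rw [hsp, Finset.prod_range_add]
        have hfirst : (∏ lv ∈ Finset.range j,
            if (k < k ∨ (k = k ∧ lv < j)) then Mnorm k else 1) = Mnorm k ^ j := by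
          rw [Finset.prod_congr rfl fun lv hlv =>
            if_pos (Or.inr ⟨rfl, Finset.mem_range.1 hlv⟩)]
          rw [Finset.prod_const, Finset.card_range]
        have hsecond : (∏ lv ∈ Finset.range (N k - j),
            if (k < k ∨ (k = k ∧ j + lv < j)) then Mnorm k else 1) = 1 :=
          Finset.prod_eq_one fun lv _ => if_neg (by omega)
        rw [hfirst, hsecond, mul_one]
      · rw [if_neg (by omega), if_neg (by omega)]
        exact Finset.prod_eq_one fun lv _ => if_neg (by omega)
    rw [Finset.prod_congr rfl fun i _ => inner i]
    rw [Fin.prod_univ_eq_prod_range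
      (fun iv => if iv < k then Mnorm iv ^ N iv else if iv = k then Mnorm k ^ j else 1) (k + p)]
    rw [Finset.prod_range_add]
    have hleft : (∏ iv ∈ Finset.range k,
        if iv < k then Mnorm iv ^ N iv else if iv = k then Mnorm k ^ j else 1) = κ := by
      rw [Finset.prod_congr rfl fun iv hiv => if_pos (Finset.mem_range.1 hiv)]
      exact hκ.symm
    have hright : (∏ iv ∈ Finset.range p,
        if k + iv < k then Mnorm (k + iv) ^ N (k + iv) else if k + iv = k then Mnorm k ^ j
          else 1) = Mnorm k ^ j := by
      rw [Finset.prod_eq_single_of_mem 0 (Finset.mem_range.2 (by omega))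
        (fun bb _ hbb => by rw [if_neg (by omega), if_neg (by omega)])]
      rw [if_neg (by omega), if_pos (by omega)]
    rw [hleft, hright]
  -- ### putting the product bounds together
  have hcompl : (κ * Mnorm k ^ j) * (∏ x ∈ Finset.univ.filter
      (fun x : (i : Fin (k + p)) × Fin (N i.1) =>
        ¬(x.1.1 < k ∨ (x.1.1 = k ∧ x.2.1 < j))), Mnorm x.1.1) = κK := by
    rw [← hfixM, Finset.prod_filter_mul_prod_filter_not]
    exact hallM
  have hfreeval : (∏ x ∈ Finset.univ.filter
      (fun x : (i : Fin (k + p)) × Fin (N i.1) =>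
        ¬(x.1.1 < k ∨ (x.1.1 = k ∧ x.2.1 < j))), Mnorm x.1.1) = κK / (κ * Mnorm k ^ j) := by
    rw [eq_div_iff hMkjpos.ne']
    linear_combination hcompl
  have hCfix : (∏ x ∈ Fx, Real.exp (birkhoff T φ (nn x.1.1) ((a0 x.1 x.2 : X))))
      ≤ Real.exp (birkhoff T φ n q + 2 * (n : ℝ) * varAt φ (2 * ε) + supNorm φ * (b : ℝ)) := by
    rw [← Real.exp_sum]
    exact Real.exp_le_exp.2 hsumest
  have hRfinal : (∑ a, if z a ∈ B then L a else 0)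
      ≤ Real.exp (birkhoff T φ n q + 2 * (n : ℝ) * varAt φ (2 * ε) + supNorm φ * (b : ℝ)) *
        (κK / (κ * Mnorm k ^ j)) := by
    calc (∑ a, if z a ∈ B then L a else 0)
        ≤ ∑ a : (∀ i : Fin (k + p), Fin (N i.1) → {x // x ∈ S i.1}),
            ∏ i : Fin (k + p), ∏ l : Fin (N i.1), g i l (a i l) := hRle
      _ = ∏ i : Fin (k + p), ∏ l : Fin (N i.1), ∑ v, g i l v := hswap
      _ = ∏ i : Fin (k + p), ∏ l : Fin (N i.1),
            (if (i.1 < k ∨ (i.1 = k ∧ l.1 < j))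
              then Real.exp (birkhoff T φ (nn i.1) ((a0 i l : X))) else Mnorm i.1) :=
          Finset.prod_congr rfl fun i _ => Finset.prod_congr rfl fun l _ => hgsum i l
      _ = ∏ x : (i : Fin (k + p)) × Fin (N i.1),
            (if (x.1.1 < k ∨ (x.1.1 = k ∧ x.2.1 < j))
              then Real.exp (birkhoff T φ (nn x.1.1) ((a0 x.1 x.2 : X))) else Mnorm x.1.1) :=
          hprod_sigma
      _ = (∏ x ∈ Fx, Real.exp (birkhoff T φ (nn x.1.1) ((a0 x.1 x.2 : X)))) *
            (κK / (κ * Mnorm k ^ j)) := by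
          rw [hsplitprod, hfreeval, ← hFxdef]
      _ ≤ _ := mul_le_mul_of_nonneg_right hCfix (le_of_lt (div_pos hκKpos hMkjpos))
  -- ### final assembly in `ℝ≥0∞`
  rw [hμB, ← ENNReal.ofReal_inv_of_pos hκKpos,
    ← ENNReal.ofReal_mul (inv_nonneg.2 hκKpos.le)]
  apply ENNReal.ofReal_le_ofReal
  calc κK⁻¹ * (∑ a, if z a ∈ B then L a else 0)
      ≤ κK⁻¹ * (Real.exp (birkhoff T φ n q + 2 * (n : ℝ) * varAt φ (2 * ε) +
          supNorm φ * (b : ℝ)) * (κK / (κ * Mnorm k ^ j))) :=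
        mul_le_mul_of_nonneg_left hRfinal (inv_nonneg.2 hκKpos.le)
    _ = (κ * Mnorm k ^ j)⁻¹ * Real.exp (birkhoff T φ n q + 2 * (n : ℝ) * varAt φ (2 * ε) +
          supNorm φ * (b : ℝ)) := by
        field_simp


end
end
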